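/- Let X be a perfectly normal space, A ⊆ X both Fσ and Gδ, g : X \ A → A continuous, and φ : X → A the retraction equal to the identity on A and g on X \ A. Then for every first Borel class function f : A → ℝ, the composition f ∘ φ : X → ℝ is of the first Borel class and extends f. -/
import Mathlib


open Set Filter Topology

def IsFSigma {X : Type*} [TopologicalSpace X] (s : Set X) : Prop :=
  ∃ F : ℕ → Set X, (∀ n, IsClosed (F n)) ∧ s = ⋃ n, F n

lemma isFSigma_iUnion_nat {X : Type*} [TopologicalSpace X] (s : ℕ → Set X)
    (h : ∀ n, IsFSigma (s n)) : IsFSigma (⋃ n, s n) := by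
  choose F hF hFeq using h
  refine ⟨fun k => F (Nat.unpair k).1 (Nat.unpair k).2, fun k => hF _ _, ?_⟩
  ext x
  simp only [mem_iUnion, hFeq]
  constructor
  · rintro ⟨n, m, hx⟩; exact ⟨Nat.pair n m, by simpa [Nat.unpair_pair] using hx⟩
  · rintro ⟨k, hx⟩; exact ⟨(Nat.unpair k).1, (Nat.unpair k).2, hx⟩

lemma IsClosed.isFSigma {X : Type*} [TopologicalSpace X] {s : Set X} (h : IsClosed s) :
    IsFSigma s := ⟨fun _ => s, fun _ => h, (iUnion_const s).symm⟩

lemma IsFSigma.inter_closed {X : Type*} [TopologicalSpace X] {s C : Set X}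
    (hs : IsFSigma s) (hC : IsClosed C) : IsFSigma (C ∩ s) := by
  obtain ⟨F, hF, rfl⟩ := hs
  exact ⟨fun n => C ∩ F n, fun n => hC.inter (hF n), by rw [inter_iUnion]⟩

lemma IsFSigma.union {X : Type*} [TopologicalSpace X] {s t : Set X}
    (hs : IsFSigma s) (ht : IsFSigma t) : IsFSigma (s ∪ t) := by
  obtain ⟨F, hF, rfl⟩ := hs
  obtain ⟨G, hG, rfl⟩ := ht
  refine ⟨fun n => if n % 2 = 0 then F (n / 2) else G (n / 2), fun n => by
    by_cases h : n % 2 = 0 <;> simp [h, hF, hG], ?_⟩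
  ext x
  simp only [mem_union, mem_iUnion]
  constructor
  · rintro (⟨n, hx⟩ | ⟨n, hx⟩)
    · have h1 : (2 * n) % 2 = 0 := by omega
      have h2 : (2 * n) / 2 = n := by omega
      exact ⟨2 * n, by simp [h1, h2, hx]⟩
    · have h1 : (2 * n + 1) % 2 = 1 := by omega
      have h2 : (2 * n + 1) / 2 = n := by omega
      exact ⟨2 * n + 1, by simp [h1, h2, hx]⟩
  · rintro ⟨n, hx⟩
    by_cases h : n % 2 = 0
    · left; exact ⟨n / 2, by simpa [h] using hx⟩
    · right; exact ⟨n / 2, by simpa [h] using hx⟩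

def FirstBorelClass {X Y : Type*} [TopologicalSpace X] [TopologicalSpace Y] (f : X → Y) : Prop :=
  ∀ U : Set Y, IsOpen U → IsFSigma (f ⁻¹' U)


theorem comp_retraction_extends {X : Type*} [TopologicalSpace X]
    (hX : ∀ U : Set X, IsOpen U → IsFSigma U) (A : Set X)
    (hFσ : IsFSigma A) (hGδ : IsGδ A)
    (g : X → X) (hg : ContinuousOn g Aᶜ) (hgA : MapsTo g Aᶜ A)
    (φ : X → A) (hφ₁ : ∀ (x : X) (hx : x ∈ A), φ x = ⟨x, hx⟩)
    (hφ₂ : ∀ x ∉ A, (φ x : X) = g x)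
    (f : A → ℝ) (hf : FirstBorelClass f) :
    FirstBorelClass (f ∘ φ) ∧ ∀ a : A, (f ∘ φ) (a : X) = f a := by
  -- Aᶜ is Fσ
  have hAc : IsFSigma Aᶜ := by
    obtain ⟨T, hTopen, rfl⟩ := hGδ.eq_iInter_nat
    rw [compl_iInter]
    exact isFSigma_iUnion_nat _ fun n => ((hTopen n).isClosed_compl).isFSigma
  constructor
  · intro U hU
    obtain ⟨F, hFcl, hFeq⟩ := hf U hU
    -- V := image of f⁻¹' U in X, is Fσ
    set S : Set A := f ⁻¹' U with hS
    set V : Set X := Subtype.val '' S with hV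
    have hVFσ : IsFSigma V := by
      rw [hV, hFeq, image_iUnion]
      refine isFSigma_iUnion_nat _ fun n => ?_
      obtain ⟨C, hC, hCeq⟩ := isClosed_induced_iff.mp (hFcl n)
      have : (Subtype.val '' F n : Set X) = C ∩ A := by
        rw [← hCeq, Subtype.image_preimage_coe]
        exact inter_comm _ _
      rw [this]
      exact hFσ.inter_closed hC
    obtain ⟨E, hEcl, hEeq⟩ := hVFσ
    -- the second piece
    have hWc : IsFSigma (Aᶜ ∩ g ⁻¹' V) := by
      rw [hEeq, preimage_iUnion, inter_iUnion]
      refine isFSigma_iUnion_nat _ fun n => ?_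
      have hcl : IsClosed ((Aᶜ.restrict g) ⁻¹' (E n)) :=
        (hEcl n).preimage (continuousOn_iff_continuous_restrict.mp hg)
      obtain ⟨C, hC, hCeq⟩ := isClosed_induced_iff.mp hcl
      have himg : Aᶜ ∩ g ⁻¹' (E n) = C ∩ Aᶜ := by
        ext x
        simp only [mem_inter_iff, mem_preimage, mem_compl_iff]
        constructor
        · rintro ⟨hx, hgx⟩
          exact ⟨(Set.ext_iff.mp hCeq ⟨x, hx⟩).mpr hgx, hx⟩
        · rintro ⟨hC', hx⟩
          exact ⟨hx, (Set.ext_iff.mp hCeq ⟨x, hx⟩).mp hC'⟩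
      rw [himg]
      exact hAc.inter_closed hC
    have key : (f ∘ φ) ⁻¹' U = V ∪ (Aᶜ ∩ g ⁻¹' V) := by
      ext x
      simp only [mem_preimage, Function.comp_apply, mem_union, mem_inter_iff, mem_compl_iff]
      by_cases hx : x ∈ A
      · rw [hφ₁ x hx]
        constructor
        · intro h; left; exact ⟨⟨x, hx⟩, h, rfl⟩
        · rintro (⟨a, ha, hax⟩ | ⟨hxc, _⟩)
          · subst hax; rwa [Subtype.coe_eta]
          · exact absurd hx hxc
      · have hgx : g x ∈ A := hgA hx
        have hφx : φ x = ⟨g x, hgx⟩ := Subtype.ext (hφ₂ x hx)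
        rw [hφx]
        constructor
        · intro h; right; exact ⟨hx, ⟨g x, hgx⟩, h, rfl⟩
        · rintro (⟨a, ha, hax⟩ | ⟨_, a, ha, hax⟩)
          · exact absurd (hax ▸ a.2) hx
          · have heq : (⟨g x, hgx⟩ : A) = a := Subtype.ext hax.symm
            rw [heq]; exact ha
    rw [key]
    exact IsFSigma.union ⟨E, hEcl, hEeq⟩ hWc
  · intro a
    simp only [Function.comp_apply]
    rw [hφ₁ a a.2]
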